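/- arXiv:1303.2670 — 3 statements merged into one kernel-verified Lean document; each statement's English description precedes it below -/
import Mathlib

section
/- Let R be a family of real-valued functions on a set E and let e_1, …, e_d : E → ℝ be finitely many functions such that {e_1, …, e_d} and R generate the same uniformity on E. Define ψ : E → ℝ^d by ψ(x) = (e_1(x), …, e_d(x)). Then for every f ∈ R there exists a continuous function F from the closure of ψ(E) in ℝ^d to ℝ such that F(ψ(x)) = f(x) for every x ∈ E. -/
/-- Two families of real-valued functions on `E` generate the same uniformity if,
for every sequence in `E`, all the `H`-images are Cauchy iff all the `G`-images are. -/
def SameUniformity {E : Type*} (H G : Set (E → ℝ)) : Prop :=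
  ∀ x : ℕ → E,
    (∀ h ∈ H, CauchySeq fun n => h (x n)) ↔ (∀ g ∈ G, CauchySeq fun n => g (x n))

/-- The embedding `ψ(x) = (e₁(x), …, e_d(x))` of `E` into `ℝ^d`. -/
def psiMap {E : Type*} {d : ℕ} (e : Fin d → E → ℝ) (x : E) : Fin d → ℝ :=
  fun i => e i x

open Filter Topology Set

/-!
If `ψ ∘ u` converges to a point `p` of `closure (range ψ)`, it is Cauchy, hence so is `f ∘ u`.
Interleaving two such sequences shows that this makes `map f (comap ψ (𝓝 p))` a Cauchy filter,
so `f` has a limit along `comap ψ (𝓝 p)`. These limits form the extension; its continuity is the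
dense-inducing extension theorem for `E`, topologized by pulling back the topology of `ℝ^d`
along `ψ`.
-/

theorem Filter.Tendsto.interleave {α : Type*} {l : Filter α} {u v : ℕ → α}
    (hu : Tendsto u atTop l) (hv : Tendsto v atTop l) :
    Tendsto (fun n => if Even n then u (n / 2) else v (n / 2)) atTop l := by
  have hhalf := Nat.tendsto_div_const_atTop two_ne_zero
  refine fun s hs => mem_map.2 ?_
  filter_upwards [(hu.comp hhalf) hs, (hv.comp hhalf) hs] with n hun hvn
  show (if Even n then u (n / 2) else v (n / 2)) ∈ s
  split_ifs
  exacts [hun, hvn]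

theorem Filter.cauchy_map_of_forall_cauchySeq {α Y : Type*} [UniformSpace Y] {l : Filter α}
    [l.IsCountablyGenerated] [l.NeBot] {f : α → Y}
    (h : ∀ u : ℕ → α, Tendsto u atTop l → CauchySeq (f ∘ u)) : Cauchy (map f l) := by
  refine cauchy_map_iff'.2 (tendsto_of_seq_tendsto fun uv huv => ?_)
  obtain ⟨hu, hv⟩ := tendsto_prod_iff'.1 huv
  have hw := cauchySeq_iff_tendsto.1 (h _ (hu.interleave hv))
  have hpair : Tendsto (fun n : ℕ => (2 * n, 2 * n + 1)) atTop atTop := by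
    rw [← prod_atTop_atTop_eq]
    exact (tendsto_id.const_mul_atTop' two_pos).prodMk
      ((tendsto_add_atTop_nat 1).comp (tendsto_id.const_mul_atTop' two_pos))
  refine (hw.comp hpair).congr fun n => ?_
  simp [Nat.not_even_bit1, show (2 * n + 1) / 2 = n by omega]

theorem exists_tendsto_comap_of_cauchySeq_comp {α X Y : Type*} [UniformSpace X]
    [FirstCountableTopology X] [UniformSpace Y] [CompleteSpace Y] {φ : α → X} {f : α → Y}
    (h : ∀ u : ℕ → α, CauchySeq (φ ∘ u) → CauchySeq (f ∘ u)) {p : X}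
    (hp : p ∈ closure (range φ)) : ∃ c, Tendsto f (comap φ (𝓝 p)) (𝓝 c) := by
  have : (comap φ (𝓝 p)).NeBot := comap_neBot_iff.2 fun t ht =>
    let ⟨_, hxt, a, ha⟩ := mem_closure_iff_nhds.1 hp t ht
    ⟨a, ha ▸ hxt⟩
  exact CompleteSpace.complete <| cauchy_map_of_forall_cauchySeq fun u hu =>
    h u (tendsto_comap_iff.1 hu).cauchySeq

theorem exists_continuous_extension_of_tendsto_comap {α X Y : Type*} [TopologicalSpace X]
    [TopologicalSpace Y] [T3Space Y] {φ : α → X} {f : α → Y}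
    (hf : ∀ p ∈ closure (range φ), ∃ c, Tendsto f (comap φ (𝓝 p)) (𝓝 c)) :
    ∃ F : closure (range φ) → Y, Continuous F ∧
      ∀ a, F ⟨φ a, subset_closure (mem_range_self a)⟩ = f a := by
  let _ : TopologicalSpace α := .induced φ ‹_›
  let i : α → closure (range φ) := fun a => ⟨φ a, subset_closure (mem_range_self a)⟩
  have hcomap (p : closure (range φ)) : comap i (𝓝 p) = comap φ (𝓝 p.1) := by
    rw [nhds_subtype, comap_comap]; rfl
  have hi : IsDenseInducing i :=
    { toIsInducing := ⟨by rw [instTopologicalSpaceSubtype, induced_compose]; rfl⟩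
      dense := Subtype.dense_iff.2 <| by rw [← range_comp]; exact subset_rfl }
  refine ⟨hi.extend f, hi.continuous_extend fun p => hcomap p ▸ hf p p.2, fun a => ?_⟩
  obtain ⟨c, hc⟩ := hf _ (subset_closure (mem_range_self a))
  have hfa : f a = c := tendsto_nhds_unique (tendsto_pure_nhds f a)
    (hc.mono_left (tendsto_iff_comap.1 (tendsto_pure_nhds φ a)))
  exact hi.extend_eq_of_tendsto (hcomap (i a) ▸ hfa ▸ hc)

theorem SameUniformity.cauchySeq_comp {E : Type*} {d : ℕ} {R : Set (E → ℝ)} {e : Fin d → E → ℝ}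
    (h : SameUniformity (range e) R) {f : E → ℝ} (hf : f ∈ R) {x : ℕ → E}
    (hx : CauchySeq (psiMap e ∘ x)) : CauchySeq (f ∘ x) := by
  refine (h x).1 ?_ f hf
  rintro _ ⟨i, rfl⟩
  exact (Pi.uniformContinuous_proj _ i).comp_cauchySeq hx

/-- If `{e₁, …, e_d} ∼ R`, every `f ∈ R` extends to a continuous function on the closure
of `ψ(E)` in `ℝ^d`. -/
theorem exists_continuous_extension {E : Type*} {d : ℕ} (R : Set (E → ℝ))
    (e : Fin d → E → ℝ) (h : SameUniformity (Set.range e) R) :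
    ∀ f ∈ R, ∃ F : closure (Set.range (psiMap e)) → ℝ, Continuous F ∧
      ∀ x : E, F ⟨psiMap e x, subset_closure (Set.mem_range_self x)⟩ = f x := fun _ hf =>
  exists_continuous_extension_of_tendsto_comap fun _ =>
    exists_tendsto_comap_of_cauchySeq_comp fun _ => h.cauchySeq_comp hf
end

section
/- Let R be a family of real-valued functions on a set E and let e_1, …, e_d : E → ℝ be finitely many functions such that {e_1, …, e_d} and R generate the same uniformity on E. Define ψ : E → ℝ^d by ψ(x) = (e_1(x), …, e_d(x)), and let E' be the closure of ψ(E) in ℝ^d. Then the continuous extensions of the members of R separate the points of E': for any ξ, η ∈ E', if F(ξ) = F(η) for every f ∈ R and every continuous function F : E' → ℝ satisfying F ∘ ψ = f, then ξ = η. -/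
/-!
Each `f ∈ R` maps sequences along which `ψ` is Cauchy to Cauchy sequences, so it has a limit
along every point of `E' = closure (ψ(E))` and extends continuously to `E'`. Given `ξ, η ∈ E'`,
approximate them by `ψ(xₙ) → ξ` and `ψ(yₙ) → η` and interleave the two sequences. If every
extension takes the same value at `ξ` and `η`, each `f ∈ R` is Cauchy along the interleaved
sequence, hence so is `ψ`, which forces `ξ = η`.
-/

open Filter Topology Set

section Interleave

variable {α β : Type*}

def interleave (x y : ℕ → α) (n : ℕ) : α :=
  if n % 2 = 0 then x (n / 2) else y (n / 2)

@[simp]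
lemma interleave_two_mul (x y : ℕ → α) (n : ℕ) : interleave x y (2 * n) = x n := by
  simp [interleave]

@[simp]
lemma interleave_two_mul_add_one (x y : ℕ → α) (n : ℕ) : interleave x y (2 * n + 1) = y n := by
  have hhalf : (2 * n + 1) / 2 = n := by omega
  simp [interleave, hhalf]

lemma comp_interleave (f : α → β) (x y : ℕ → α) :
    f ∘ interleave x y = interleave (f ∘ x) (f ∘ y) := by
  funext n
  simp only [interleave, Function.comp_apply, apply_ite f]

lemma tendsto_interleave {l : Filter α} {x y : ℕ → α} (hx : Tendsto x atTop l)
    (hy : Tendsto y atTop l) : Tendsto (interleave x y) atTop l := by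
  intro s hs
  rw [mem_map]
  have hhalf : Tendsto (· / 2) atTop atTop := Nat.tendsto_div_const_atTop two_ne_zero
  filter_upwards [hhalf.eventually (hx hs), hhalf.eventually (hy hs)] with n hxn hyn
  simp only [mem_preimage, interleave]
  split_ifs <;> assumption

lemma tendsto_right_of_cauchySeq_interleave [UniformSpace α] {x y : ℕ → α} {a : α}
    (hxy : CauchySeq (interleave x y)) (hx : Tendsto x atTop (𝓝 a)) : Tendsto y atTop (𝓝 a) := by
  have hlim : Tendsto (interleave x y) atTop (𝓝 a) :=
    tendsto_nhds_of_cauchySeq_of_subseq hxy (f := (2 * ·))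
      (tendsto_atTop_mono (fun n => show n ≤ 2 * n by omega) tendsto_id)
      (by simpa [Function.comp_def] using hx)
  simpa [Function.comp_def] using
    hlim.comp (f := (2 * · + 1))
      (tendsto_atTop_mono (fun n => show n ≤ 2 * n + 1 by omega) tendsto_id)

end Interleave

theorem Filter.exists_tendsto_of_forall_cauchySeq {α γ : Type*} [UniformSpace γ] [CompleteSpace γ]
    [Nonempty γ] {l : Filter α} [l.IsCountablyGenerated] {f : α → γ}
    (hf : ∀ u : ℕ → α, Tendsto u atTop l → CauchySeq (f ∘ u)) : ∃ c, Tendsto f l (𝓝 c) := by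
  rcases l.eq_or_neBot with rfl | hl
  · exact ⟨Classical.arbitrary γ, tendsto_bot⟩
  obtain ⟨u, hu⟩ := exists_seq_tendsto l
  obtain ⟨c, hc⟩ := cauchySeq_tendsto_of_complete (hf u hu)
  refine ⟨c, tendsto_iff_seq_tendsto.mpr fun v hv => ?_⟩
  have huv := hf _ (tendsto_interleave hu hv)
  rw [comp_interleave] at huv
  exact tendsto_right_of_cauchySeq_interleave huv hc

section DenseRange

variable {E Y γ : Type*} [TopologicalSpace Y] {ι : E → Y}

theorem DenseRange.exists_continuous_extension [TopologicalSpace γ] [T3Space γ]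
    (hι : DenseRange ι) {f : E → γ} (hf : ∀ y, ∃ c, Tendsto f (comap ι (𝓝 y)) (𝓝 c)) :
    ∃ F : Y → γ, Continuous F ∧ ∀ x, F (ι x) = f x := by
  -- The topology pulled back along `ι` makes `ι` a dense inducing map.
  let _ : TopologicalSpace E := .induced ι ‹_›
  have hdi : IsDenseInducing ι := ⟨⟨rfl⟩, hι⟩
  exact ⟨hdi.extend f, hdi.continuous_extend hf, hdi.extend_eq' hf⟩

theorem DenseRange.exists_seq_tendsto [FirstCountableTopology Y] (hι : DenseRange ι) (y : Y) :
    ∃ u : ℕ → E, Tendsto (ι ∘ u) atTop (𝓝 y) := by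
  obtain ⟨s, hs, hlim⟩ := mem_closure_iff_seq_limit.mp (hι y)
  choose u hu using hs
  exact ⟨u, by simpa only [Function.comp_def, hu] using hlim⟩

end DenseRange

section Separation

variable {E Y : Type*} [UniformSpace Y] [FirstCountableTopology Y] {ι : E → Y}

theorem exists_continuous_extension_of_cauchySeq (hι : DenseRange ι) {f : E → ℝ}
    (hf : ∀ u : ℕ → E, CauchySeq (ι ∘ u) → CauchySeq (f ∘ u)) :
    ∃ F : Y → ℝ, Continuous F ∧ ∀ x, F (ι x) = f x :=
  hι.exists_continuous_extension fun _ =>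
    exists_tendsto_of_forall_cauchySeq fun u hu => hf u (tendsto_comap_iff.mp hu).cauchySeq

theorem eq_of_forall_extension_eq [T2Space Y] (hι : DenseRange ι) {R : Set (E → ℝ)}
    (hR : ∀ u : ℕ → E, CauchySeq (ι ∘ u) ↔ ∀ f ∈ R, CauchySeq (f ∘ u)) {ξ η : Y}
    (hsep : ∀ f ∈ R, ∀ F : Y → ℝ, Continuous F → (∀ x, F (ι x) = f x) → F ξ = F η) :
    ξ = η := by
  obtain ⟨x, hx⟩ := hι.exists_seq_tendsto ξ
  obtain ⟨y, hy⟩ := hι.exists_seq_tendsto η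
  have hcauchy : CauchySeq (ι ∘ interleave x y) := by
    refine (hR _).mpr fun f hf => ?_
    obtain ⟨F, hFc, hFι⟩ :=
      exists_continuous_extension_of_cauchySeq hι fun u hu => (hR u).mp hu f hf
    have hfF : f = F ∘ ι := funext fun x => (hFι x).symm
    have hFξ : Tendsto (F ∘ ι ∘ x) atTop (𝓝 (F ξ)) := (hFc.tendsto ξ).comp hx
    have hFη : Tendsto (F ∘ ι ∘ y) atTop (𝓝 (F ξ)) :=
      hsep f hf F hFc hFι ▸ (hFc.tendsto η).comp hy
    rw [hfF, Function.comp_assoc, comp_interleave, comp_interleave]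
    exact (tendsto_interleave hFξ hFη).cauchySeq
  rw [comp_interleave] at hcauchy
  exact tendsto_nhds_unique (tendsto_right_of_cauchySeq_interleave hcauchy hx) hy

end Separation

section ClosureRange

variable {E X : Type*}

def toClosureRange [TopologicalSpace X] (ψ : E → X) (x : E) : closure (range ψ) :=
  ⟨ψ x, subset_closure (mem_range_self x)⟩

theorem denseRange_toClosureRange [TopologicalSpace X] (ψ : E → X) :
    DenseRange (toClosureRange ψ) := by
  rw [DenseRange, Subtype.dense_iff, ← range_comp]
  exact subset_rfl

theorem cauchySeq_toClosureRange_comp_iff [UniformSpace X] {ψ : E → X} {u : ℕ → E} :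
    CauchySeq (toClosureRange ψ ∘ u) ↔ CauchySeq (ψ ∘ u) := by
  rw [CauchySeq, ← isUniformEmbedding_subtype_val.isUniformInducing.cauchy_map_iff, map_map]
  rfl

end ClosureRange

theorem cauchySeq_psiMap_comp_iff {E : Type*} {d : ℕ} {e : Fin d → E → ℝ} {u : ℕ → E} :
    CauchySeq (psiMap e ∘ u) ↔ ∀ h ∈ range e, CauchySeq (h ∘ u) := by
  rw [CauchySeq, cauchy_pi_iff', forall_mem_range]
  simp only [map_map]
  rfl

/-- If `{e₁, …, e_d} ∼ R`, the continuous extensions of members of `R` to the intrinsic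
state space `E' = closure (ψ(E))` separate the points of `E'`. -/
theorem extensions_separate_points {E : Type*} {d : ℕ} (R : Set (E → ℝ))
    (e : Fin d → E → ℝ) (h : SameUniformity (Set.range e) R)
    (ξ η : closure (Set.range (psiMap e)))
    (hsep : ∀ f ∈ R, ∀ F : closure (Set.range (psiMap e)) → ℝ, Continuous F →
      (∀ x : E, F ⟨psiMap e x, subset_closure (Set.mem_range_self x)⟩ = f x) →
      F ξ = F η) :
    ξ = η :=
  eq_of_forall_extension_eq (denseRange_toClosureRange (psiMap e))
    (fun u => cauchySeq_toClosureRange_comp_iff.trans (cauchySeq_psiMap_comp_iff.trans (h u)))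
    hsep
end

section
/- Let E be a closed subset of ℝ^d and let H be a family of continuous real-valued functions on E. Then the σ-algebra on E generated by H coincides with the Borel σ-algebra of E if and only if H separates the points of E (i.e., for all x ≠ y in E there exists h ∈ H with h(x) ≠ h(y)). -/
/-!
If `H` separates points, the Lindelöf property of `E × E` minus its diagonal, which is covered
by the open sets `{h x ≠ h y}`, gives a countable separating subfamily `T`. The map
`x ↦ (h x)_{h ∈ T}` is then a continuous injection of the Polish space `E` into the countable
product `ℝ^T`, hence a Borel embedding (Lusin–Souslin), so every Borel set of `E` is a preimage
of a Borel set of `ℝ^T`. Conversely, the σ-algebra generated by `H` is pulled back along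
`x ↦ (h x)_{h ∈ H}`, so it cannot separate two points that `H` does not separate, whereas
Borel sets contain singletons.
-/

open MeasureTheory MeasurableSpace Set

variable {α β : Type*}

theorem MeasurableSpace.iSup_comap_eq_comap_pi [m : MeasurableSpace β] (H : Set (α → β)) :
    ⨆ h ∈ H, m.comap h = MeasurableSpace.pi.comap (fun x (h : H) ↦ h.1 x) := by
  simp only [MeasurableSpace.pi, comap_iSup, comap_comp, iSup_subtype']
  rfl

theorem separatesPoints_of_measurableSingletonClass_iSup_comap [m : MeasurableSpace β]
    {H : Set (α → β)} [@MeasurableSingletonClass α (⨆ h ∈ H, m.comap h)] :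
    H.SeparatesPoints := by
  intro x y hxy
  by_contra! hH
  have hx : MeasurableSet[⨆ h ∈ H, m.comap h] {x} := @measurableSet_singleton _ _ ‹_› x
  obtain ⟨t, -, ht⟩ := (iSup_comap_eq_comap_pi H) ▸ hx
  have hy : y ∈ (fun z (h : H) ↦ h.1 z) ⁻¹' t := by
    have hxt : x ∈ (fun z (h : H) ↦ h.1 z) ⁻¹' t := ht ▸ mem_singleton x
    simpa only [mem_preimage, fun h : H ↦ hH h.1 h.2] using hxt
  exact hxy (ht ▸ hy).symm

theorem exists_countable_subset_separatesPoints [TopologicalSpace α] [SecondCountableTopology α]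
    [TopologicalSpace β] [T2Space β] {H : Set (α → β)} (hH : ∀ h ∈ H, Continuous h)
    (hsep : H.SeparatesPoints) : ∃ T ⊆ H, T.Countable ∧ T.SeparatesPoints := by
  obtain ⟨T, hTH, hTc, hT⟩ := TopologicalSpace.isOpen_biUnion_countable H
    (fun h ↦ {p : α × α | h p.1 ≠ h p.2})
    fun h hh ↦ isOpen_ne_fun ((hH h hh).comp continuous_fst) ((hH h hh).comp continuous_snd)
  refine ⟨T, hTH, hTc, fun x y hxy ↦ ?_⟩
  obtain ⟨h, hh, hxy⟩ := hsep hxy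
  have : (x, y) ∈ ⋃ h ∈ T, {p : α × α | h p.1 ≠ h p.2} := hT ▸ mem_biUnion hh hxy
  simpa only [mem_iUnion, exists_prop, mem_ofPred_eq] using this

theorem iSup_comap_borel_eq_borel_of_countable [TopologicalSpace α] [PolishSpace α]
    [TopologicalSpace β] [SecondCountableTopology β] [T2Space β] {T : Set (α → β)}
    (hTc : T.Countable) (hT : ∀ h ∈ T, Continuous h) (hsep : T.SeparatesPoints) :
    ⨆ h ∈ T, (borel β).comap h = borel α := by
  borelize α β
  have : Countable T := hTc.to_subtype
  have hcont : Continuous fun x (h : T) ↦ h.1 x := continuous_pi fun h ↦ hT h.1 h.2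
  have hinj : Function.Injective fun x (h : T) ↦ h.1 x := fun x y hxy ↦ by
    by_contra hne
    obtain ⟨h, hh, hne⟩ := hsep hne
    exact hne (congrFun hxy ⟨h, hh⟩)
  rw [iSup_comap_eq_comap_pi, (hcont.measurableEmbedding hinj).comap_eq]

theorem iSup_comap_borel_eq_borel_iff [TopologicalSpace α] [PolishSpace α]
    [TopologicalSpace β] [SecondCountableTopology β] [T2Space β] {H : Set (α → β)}
    (hH : ∀ h ∈ H, Continuous h) :
    ⨆ h ∈ H, (borel β).comap h = borel α ↔ H.SeparatesPoints := by
  borelize α β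
  refine ⟨fun hgen ↦ ?_, fun hsep ↦ le_antisymm ?_ ?_⟩
  · have : @MeasurableSingletonClass α (⨆ h ∈ H, (borel β).comap h) := hgen ▸ inferInstance
    exact separatesPoints_of_measurableSingletonClass_iSup_comap
  · exact iSup₂_le fun h hh ↦ (hH h hh).borel_measurable.comap_le
  · obtain ⟨T, hTH, hTc, hT⟩ := exists_countable_subset_separatesPoints hH hsep
    calc borel α = ⨆ h ∈ T, (borel β).comap h :=
          (iSup_comap_borel_eq_borel_of_countable hTc (fun h hh ↦ hH h (hTH hh)) hT).symm
      _ ≤ ⨆ h ∈ H, (borel β).comap h := biSup_mono hTH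

/-- Proposition A.1: for a closed subset `E` of `ℝ^d` and a family `H` of continuous
real-valued functions on `E`, the σ-algebra generated by `H` is the Borel σ-algebra of
`E` if and only if `H` separates the points of `E`. -/
theorem generated_eq_borel_iff_separates {d : ℕ} (E : Set (Fin d → ℝ)) (hE : IsClosed E)
    (H : Set (↥E → ℝ)) (hH : ∀ h ∈ H, Continuous h) :
    (⨆ h ∈ H, MeasurableSpace.comap h (borel ℝ)) = borel ↥E ↔
      ∀ x y : ↥E, x ≠ y → ∃ h ∈ H, h x ≠ h y := by
  have : PolishSpace E := hE.polishSpace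
  exact iSup_comap_borel_eq_borel_iff hH
end
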